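/- arXiv:2601.22799 — 4 statements merged into one kernel-verified Lean document; each statement's English description precedes it below -/
import Mathlib

section
/- Bias bound for the multilevel estimator (Lemma A.3, with the per-coordinate bias control as explicit hypothesis): if h is a 𝒢-measurable ℝ^d-valued random vector such that for every level k ∈ {1,…,m} and every coordinate j ∈ {1,…,d}, almost surely | E[ (S_{τ(k)})_j | 𝒢 ] − h_j | ≤ 2 ζ G / ( (1 − α) ⌊τ(k)⌋ ), where ζ > 0 and α ∈ [0,1), then almost surely ‖ E[ Ĥ | 𝒢 ] − h ‖ ≤ 2 ζ G √d / ( (1 − α) ⌊τ(k*)⌋ ). -/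
open MeasureTheory

/-- Partial average `S_r = ⌊r⌋⁻¹ ∑_{i=1}^{⌊r⌋} H(X_i)` along a trajectory
(indexed from `0` here, so `X 0` plays the role of `X₁`). -/
noncomputable def partialAvg {q d : ℕ} (H : (Fin q → ℝ) → EuclideanSpace ℝ (Fin d))
    (X : ℕ → (Fin q → ℝ)) (r : ℝ) : EuclideanSpace ℝ (Fin d) :=
  (⌊r⌋₊ : ℝ)⁻¹ • ∑ i ∈ Finset.range ⌊r⌋₊, H (X i)

section Aux

variable {Ω : Type*} {E : Type*} [NormedAddCommGroup E] [NormedSpace ℝ E]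

/-- If `A` is independent of `ℋ` (as a measure identity) and `V` is `ℋ`-strongly measurable,
then `∫_A V = μ(A) • ∫ V`. -/
lemma aux_setIntegral_of_indep {m0 : MeasurableSpace Ω} {μ : Measure Ω}
    {ℋ : MeasurableSpace Ω} (hle : ℋ ≤ m0) {A : Set Ω}
    (hAB : ∀ B, MeasurableSet[ℋ] B → μ (A ∩ B) = μ A * μ B)
    {V : Ω → E} (hV : StronglyMeasurable[ℋ] V) :
    ∫ ω in A, V ω ∂μ = (μ A).toReal • ∫ ω, V ω ∂μ := by
  have h1 : (μ.restrict A).trim hle = ((μ A) • μ).trim hle := by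
    refine Measure.ext fun s hs => ?_
    rw [trim_measurableSet_eq hle hs, trim_measurableSet_eq hle hs,
      Measure.restrict_apply (hle s hs), Set.inter_comm s A, hAB s hs,
      Measure.smul_apply, smul_eq_mul]
  calc ∫ ω in A, V ω ∂μ = ∫ ω, V ω ∂((μ.restrict A).trim hle) := integral_trim hle hV
    _ = ∫ ω, V ω ∂(((μ A) • μ).trim hle) := by rw [h1]
    _ = ∫ ω, V ω ∂((μ A) • μ) := (integral_trim hle hV).symm
    _ = (μ A).toReal • ∫ ω, V ω ∂μ := integral_smul_measure _ _

/-- Conditional expectation of an independent indicator times a measurable function. -/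
lemma aux_condexp_indicator [CompleteSpace E] {m0 : MeasurableSpace Ω} {μ : Measure Ω}
    [IsProbabilityMeasure μ] {𝒢 ℋ : MeasurableSpace Ω} (h𝒢ℋ : 𝒢 ≤ ℋ) (hℋ : ℋ ≤ m0)
    {A : Set Ω} (hA : MeasurableSet[m0] A)
    (hAB : ∀ B, MeasurableSet[ℋ] B → μ (A ∩ B) = μ A * μ B)
    {W : Ω → E} (hW : StronglyMeasurable[ℋ] W) (hWint : Integrable W μ) :
    μ[A.indicator W | 𝒢] =ᵐ[μ] (μ A).toReal • μ[W | 𝒢] := by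
  have h𝒢 : 𝒢 ≤ m0 := h𝒢ℋ.trans hℋ
  letI : MeasurableSpace Ω := m0
  haveI : IsFiniteMeasure (μ.trim h𝒢) := isFiniteMeasure_trim h𝒢
  refine (ae_eq_condExp_of_forall_setIntegral_eq h𝒢 (hWint.indicator hA)
    (fun s _ _ => (integrable_condExp.smul _).integrableOn)
    (fun s hs _ => ?_)
    ((stronglyMeasurable_condExp.const_smul _).aestronglyMeasurable)).symm
  have hsM : MeasurableSet[m0] s := h𝒢 s hs
  have hrhs : ∫ x in s, A.indicator W x ∂μ = (μ A).toReal • ∫ x in s, W x ∂μ := by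
    rw [← integral_indicator hsM, Set.indicator_indicator, Set.inter_comm s A,
      ← Set.indicator_indicator, integral_indicator hA,
      aux_setIntegral_of_indep hℋ hAB (hW.indicator (h𝒢ℋ s hs)), integral_indicator hsM]
  simp only [Pi.smul_apply]
  rw [integral_smul, setIntegral_condExp h𝒢 hWint hs, hrhs]

lemma aux_telescope {E : Type*} [AddCommGroup E] (f : ℕ → E) :
    ∀ n : ℕ, ∑ k ∈ Finset.Icc 1 n, (f k - f (k - 1)) = f n - f 0
  | 0 => by simp
  | (n + 1) => by
    rw [Finset.sum_Icc_succ_top (by omega : 1 ≤ n + 1), aux_telescope f n]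
    simp only [Nat.add_sub_cancel]
    abel

end Aux

/-- Lemma A.3 of the paper: bias bound for the randomized multilevel estimator,
with the per-coordinate bias control as an explicit hypothesis. -/
theorem mlmc_bias_bound
    {Ω : Type*} (𝒢 : MeasurableSpace Ω) {m0 : MeasurableSpace Ω} {μ : Measure Ω} [IsProbabilityMeasure μ]
    (h𝒢 : 𝒢 ≤ m0)
    {d q : ℕ} (G : ℝ) (hG : 0 < G)
    (H : (Fin q → ℝ) → EuclideanSpace ℝ (Fin d)) (hHmeas : Measurable H)
    (hHbd : ∀ x, ‖H x‖ ≤ G)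
    (X : ℕ → Ω → (Fin q → ℝ)) (hX : ∀ i, Measurable (X i))
    (m : ℕ) (hm : 1 ≤ m)
    (p : ℕ → ℝ) (hppos : ∀ k, 1 ≤ k → k ≤ m → 0 < p k)
    (hpsum : ∑ k ∈ Finset.Icc 1 m, p k = 1)
    (hpmono : ∀ j k, 1 ≤ j → j ≤ k → k ≤ m → p k ≤ p j)
    (τ : ℕ → ℝ) (hτ0 : τ 0 = max 1 (1 / (2 * p 1)))
    (hτ : ∀ k, 1 ≤ k → k ≤ m → τ k = 1 / p k)
    (hτ0floor : ⌊τ 0⌋₊ = 1)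
    (T : ℝ) (hT : τ 1 ≤ T)
    (kstar : ℕ) (hk1 : 1 ≤ kstar) (hk2 : kstar ≤ m)
    (hkle : (⌊τ kstar⌋₊ : ℝ) ≤ T)
    (hkmax : ∀ k, 1 ≤ k → k ≤ m → (⌊τ k⌋₊ : ℝ) ≤ T → k ≤ kstar)
    (K : Ω → ℕ) (hKmeas : Measurable K)
    (hKlaw : ∀ k, 1 ≤ k → k ≤ m → μ {ω | K ω = k} = ENNReal.ofReal (p k))
    (hKrange : ∀ᵐ ω ∂μ, 1 ≤ K ω ∧ K ω ≤ m)
    (hindep : ProbabilityTheory.Indep (MeasurableSpace.comap K inferInstance)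
      (𝒢 ⊔ ⨆ i, MeasurableSpace.comap (X i) inferInstance) μ)
    (Hhat : Ω → EuclideanSpace ℝ (Fin d))
    (hHhat : ∀ ω, Hhat ω = H (X 0 ω) +
      (if (⌊τ (K ω)⌋₊ : ℝ) ≤ T then
        τ (K ω) • (partialAvg H (fun i => X i ω) (τ (K ω)) -
                   partialAvg H (fun i => X i ω) (τ (K ω - 1)))
       else 0))
    -- the 𝒢-measurable target h and the per-coordinate bias control
    (ζ α : ℝ) (hζ : 0 < ζ) (hα0 : 0 ≤ α) (hα1 : α < 1)
    (h : Ω → EuclideanSpace ℝ (Fin d)) (hhmeas : StronglyMeasurable[𝒢] h)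
    (hbias : ∀ k, 1 ≤ k → k ≤ m → ∀ j : Fin d, ∀ᵐ ω ∂μ,
      |(μ[(fun ω' => partialAvg H (fun i => X i ω') (τ k)) | 𝒢]) ω j - h ω j|
        ≤ 2 * ζ * G / ((1 - α) * (⌊τ k⌋₊ : ℝ))) :
    ∀ᵐ ω ∂μ,
      ‖(μ[Hhat | 𝒢]) ω - h ω‖
        ≤ 2 * ζ * G * Real.sqrt d / ((1 - α) * (⌊τ kstar⌋₊ : ℝ)) := by
  classical
  set ℋ : MeasurableSpace Ω := 𝒢 ⊔ ⨆ i, MeasurableSpace.comap (X i) inferInstance with hℋdef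
  letI : MeasurableSpace Ω := m0
  have h𝒢ℋ : 𝒢 ≤ ℋ := le_sup_left
  have hℋ : ℋ ≤ m0 := by
    refine sup_le h𝒢 (iSup_le fun i => ?_)
    exact measurable_iff_comap_le.1 (hX i)
  set S : ℕ → Ω → EuclideanSpace ℝ (Fin d) :=
    fun k ω' => partialAvg H (fun i => X i ω') (τ k) with hSdef
  -- measurability of the partial averages w.r.t. ℋ
  have hXi : ∀ i, Measurable[ℋ] (X i) := fun i =>
    measurable_iff_comap_le.2
      ((le_iSup (fun i => MeasurableSpace.comap (X i) inferInstance) i).trans le_sup_right)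
  have hHXi : ∀ i, StronglyMeasurable[ℋ] (fun ω => H (X i ω)) := fun i =>
    (hHmeas.comp (hXi i)).stronglyMeasurable
  have hSsm : ∀ k, StronglyMeasurable[ℋ] (S k) := by
    intro k
    have hsum : StronglyMeasurable[ℋ] (fun ω => ∑ i ∈ Finset.range ⌊τ k⌋₊, H (X i ω)) :=
      Finset.stronglyMeasurable_fun_sum _ fun i _ => hHXi i
    exact hsum.fun_const_smul _
  have hSbd : ∀ k ω, ‖S k ω‖ ≤ G := by
    intro k ω
    show ‖(⌊τ k⌋₊ : ℝ)⁻¹ • ∑ i ∈ Finset.range ⌊τ k⌋₊, H (X i ω)‖ ≤ G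
    rcases Nat.eq_zero_or_pos ⌊τ k⌋₊ with h0 | hpos
    · simp only [h0, Finset.range_zero, Finset.sum_empty, smul_zero, norm_zero]
      exact hG.le
    · have hn : (0:ℝ) < (⌊τ k⌋₊ : ℝ) := by exact_mod_cast hpos
      rw [norm_smul]
      have h1 : ‖∑ i ∈ Finset.range ⌊τ k⌋₊, H (X i ω)‖ ≤ (⌊τ k⌋₊ : ℝ) * G := by
        refine le_trans (norm_sum_le _ _) ?_
        calc ∑ i ∈ Finset.range ⌊τ k⌋₊, ‖H (X i ω)‖
            ≤ ∑ _i ∈ Finset.range ⌊τ k⌋₊, G := Finset.sum_le_sum fun i _ => hHbd _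
          _ = (⌊τ k⌋₊ : ℝ) * G := by
              rw [Finset.sum_const, Finset.card_range, nsmul_eq_mul]
      calc ‖(⌊τ k⌋₊ : ℝ)⁻¹‖ * ‖∑ i ∈ Finset.range ⌊τ k⌋₊, H (X i ω)‖
          ≤ (⌊τ k⌋₊ : ℝ)⁻¹ * ((⌊τ k⌋₊ : ℝ) * G) := by
            rw [Real.norm_eq_abs, abs_of_nonneg (by positivity)]
            exact mul_le_mul_of_nonneg_left h1 (by positivity)
        _ = G := by field_simp
  have hSint : ∀ k, Integrable (S k) μ := fun k =>
    Integrable.mono' (integrable_const G) ((hSsm k).mono hℋ).aestronglyMeasurable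
      (ae_of_all _ (hSbd k))
  have hH0sm : StronglyMeasurable[ℋ] (fun ω => H (X 0 ω)) := hHXi 0
  have hH0int : Integrable (fun ω => H (X 0 ω)) μ :=
    Integrable.mono' (integrable_const G) (hH0sm.mono hℋ).aestronglyMeasurable
      (ae_of_all _ fun ω => hHbd _)
  -- the truncation condition is equivalent to `k ≤ kstar` on the relevant range
  have hcond : ∀ k, 1 ≤ k → k ≤ m → (((⌊τ k⌋₊ : ℝ) ≤ T) ↔ k ≤ kstar) := by
    intro k h1 h2
    constructor
    · exact hkmax k h1 h2
    · intro hk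
      have hτle : τ k ≤ τ kstar := by
        rw [hτ k h1 h2, hτ kstar hk1 hk2]
        exact one_div_le_one_div_of_le (hppos kstar hk1 hk2) (hpmono k kstar h1 hk hk2)
      exact le_trans (by exact_mod_cast Nat.floor_le_floor hτle) hkle
  -- the per-level summands
  set W : ℕ → Ω → EuclideanSpace ℝ (Fin d) := fun k ω =>
    H (X 0 ω) + (if k ≤ kstar then τ k • (S k ω - S (k - 1) ω) else 0) with hWdef
  have hWsm : ∀ k, StronglyMeasurable[ℋ] (W k) := by
    intro k
    by_cases hk : k ≤ kstar
    · have hWeq : W k = fun ω => H (X 0 ω) + τ k • (S k ω - S (k - 1) ω) := by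
        funext ω; simp [hWdef, hk]
      rw [hWeq]
      exact hH0sm.add (((hSsm k).sub (hSsm (k - 1))).fun_const_smul _)
    · have hWeq : W k = fun ω => H (X 0 ω) := by
        funext ω; simp [hWdef, hk]
      rw [hWeq]; exact hH0sm
  have hWint : ∀ k, Integrable (W k) μ := by
    intro k
    by_cases hk : k ≤ kstar
    · have hWeq : W k = (fun ω => H (X 0 ω)) + τ k • (S k - S (k - 1)) := by
        funext ω; simp [hWdef, hk]
      rw [hWeq]
      exact hH0int.add (((hSint k).sub (hSint (k - 1))).smul (τ k))
    · have hWeq : W k = fun ω => H (X 0 ω) := by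
        funext ω; simp [hWdef, hk]
      rw [hWeq]; exact hH0int
  -- the level sets of K
  have hAset : ∀ k : ℕ,
      MeasurableSet[MeasurableSpace.comap K inferInstance] {ω | K ω = k} := fun k =>
    ⟨{k}, measurableSet_singleton k, rfl⟩
  have hAm0 : ∀ k : ℕ, MeasurableSet[m0] {ω | K ω = k} := fun k =>
    hKmeas (measurableSet_singleton k)
  -- a.e. decomposition of Hhat
  have hdecomp : Hhat =ᵐ[μ] ∑ k ∈ Finset.Icc 1 m, ({ω' | K ω' = k}).indicator (W k) := by
    filter_upwards [hKrange] with ω hω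
    obtain ⟨h1, h2⟩ := hω
    rw [Finset.sum_apply,
      Finset.sum_eq_single_of_mem (K ω) (Finset.mem_Icc.2 ⟨h1, h2⟩)
        (fun b _ hne => Set.indicator_of_notMem (fun hmem => hne (by simpa using hmem.symm)) _),
      Set.indicator_of_mem (by exact rfl : ω ∈ {ω' | K ω' = K ω}), hHhat ω]
    show _ = H (X 0 ω) + (if K ω ≤ kstar then τ (K ω) • (S (K ω) ω - S (K ω - 1) ω) else 0)
    congr 1
    exact if_congr (hcond (K ω) h1 h2) rfl rfl
  -- conditional expectation of each indicator term
  have hkey : ∀ k, 1 ≤ k → k ≤ m →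
      μ[({ω' | K ω' = k}).indicator (W k) | 𝒢] =ᵐ[μ] p k • μ[W k | 𝒢] := by
    intro k h1 h2
    have hAB : ∀ B, MeasurableSet[ℋ] B →
        μ ({ω' | K ω' = k} ∩ B) = μ {ω' | K ω' = k} * μ B := fun B hB =>
      ((ProbabilityTheory.Indep_iff _ _ _).1 hindep) _ _ (hAset k) hB
    have hstep := aux_condexp_indicator h𝒢ℋ hℋ (hAm0 k) hAB (hWsm k) (hWint k)
    have hμA : (μ {ω' | K ω' = k}).toReal = p k := by
      rw [hKlaw k h1 h2, ENNReal.toReal_ofReal (hppos k h1 h2).le]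
    rwa [hμA] at hstep
  -- conditional expectation of each W k
  have hceW : ∀ k, 1 ≤ k → k ≤ m → μ[W k | 𝒢] =ᵐ[μ]
      fun ω => (μ[(fun ω' => H (X 0 ω')) | 𝒢]) ω +
        (if k ≤ kstar then τ k • ((μ[S k | 𝒢]) ω - (μ[S (k - 1) | 𝒢]) ω) else 0) := by
    intro k _ _
    by_cases hk : k ≤ kstar
    · have hWeq : W k = (fun ω' => H (X 0 ω')) + τ k • (S k - S (k - 1)) := by
        funext ω; simp [hWdef, hk]
      rw [hWeq]
      have e1 := condExp_add (μ := μ) (m := 𝒢) hH0int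
        (((hSint k).sub (hSint (k - 1))).smul (τ k))
      have e2 := condExp_smul (μ := μ) (m := 𝒢) (τ k) (S k - S (k - 1))
      have e3 := condExp_sub (μ := μ) (m := 𝒢) (hSint k) (hSint (k - 1))
      filter_upwards [e1, e2, e3] with ω he1 he2 he3
      rw [he1, Pi.add_apply, he2, Pi.smul_apply, he3, Pi.sub_apply, if_pos hk]
    · have hWeq : W k = fun ω' => H (X 0 ω') := by
        funext ω; simp [hWdef, hk]
      rw [hWeq]
      refine ae_of_all _ fun ω => ?_
      simp [hk]
  -- the value of the conditional expectation of S 0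
  have hS0 : S 0 = fun ω' => H (X 0 ω') := by
    funext ω
    show partialAvg H (fun i => X i ω) (τ 0) = _
    simp [partialAvg, hτ0floor]
  -- main identity: E[Hhat | 𝒢] = E[S kstar | 𝒢] a.e.
  have t1 : μ[Hhat | 𝒢] =ᵐ[μ]
      μ[∑ k ∈ Finset.Icc 1 m, ({ω' | K ω' = k}).indicator (W k) | 𝒢] :=
    condExp_congr_ae hdecomp
  have t2 := condExp_finsetSum (μ := μ) (m := 𝒢)
    (s := Finset.Icc 1 m) (f := fun k => ({ω' | K ω' = k}).indicator (W k))
    (fun k _ => (hWint k).indicator (hAm0 k))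
  have hball : ∀ᵐ ω ∂μ, ∀ k ∈ Finset.Icc 1 m,
      (μ[({ω' | K ω' = k}).indicator (W k) | 𝒢]) ω = p k • (μ[W k | 𝒢]) ω :=
    (ae_ball_iff (Finset.Icc 1 m : Finset ℕ).countable_toSet).2 fun k hk => by
      obtain ⟨h1, h2⟩ := Finset.mem_Icc.1 hk
      exact (hkey k h1 h2).mono fun ω hω => by rw [hω]; rfl
  have hballW : ∀ᵐ ω ∂μ, ∀ k ∈ Finset.Icc 1 m,
      (μ[W k | 𝒢]) ω = (μ[(fun ω' => H (X 0 ω')) | 𝒢]) ω +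
        (if k ≤ kstar then τ k • ((μ[S k | 𝒢]) ω - (μ[S (k - 1) | 𝒢]) ω) else 0) :=
    (ae_ball_iff (Finset.Icc 1 m : Finset ℕ).countable_toSet).2 fun k hk => by
      obtain ⟨h1, h2⟩ := Finset.mem_Icc.1 hk
      exact (hceW k h1 h2).mono fun ω hω => hω
  have hmain : ∀ᵐ ω ∂μ, (μ[Hhat | 𝒢]) ω = (μ[S kstar | 𝒢]) ω := by
    filter_upwards [t1, t2, hball, hballW] with ω ht1 ht2 h3 h4
    rw [ht1, ht2, Finset.sum_apply]
    have step1 : ∑ k ∈ Finset.Icc 1 m, (μ[({ω' | K ω' = k}).indicator (W k) | 𝒢]) ω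
        = ∑ k ∈ Finset.Icc 1 m, p k • ((μ[(fun ω' => H (X 0 ω')) | 𝒢]) ω +
            (if k ≤ kstar then τ k • ((μ[S k | 𝒢]) ω - (μ[S (k - 1) | 𝒢]) ω) else 0)) :=
      Finset.sum_congr rfl fun k hk => by rw [h3 k hk, h4 k hk]
    rw [step1]
    have step2 : ∀ k ∈ Finset.Icc 1 m,
        p k • ((μ[(fun ω' => H (X 0 ω')) | 𝒢]) ω +
            (if k ≤ kstar then τ k • ((μ[S k | 𝒢]) ω - (μ[S (k - 1) | 𝒢]) ω) else 0))
        = p k • (μ[(fun ω' => H (X 0 ω')) | 𝒢]) ω +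
            (if k ≤ kstar then (μ[S k | 𝒢]) ω - (μ[S (k - 1) | 𝒢]) ω else 0) := by
      intro k hk
      obtain ⟨h1, h2⟩ := Finset.mem_Icc.1 hk
      rw [smul_add]
      congr 1
      by_cases hks : k ≤ kstar
      · rw [if_pos hks, if_pos hks, smul_smul]
        have hpk1 : p k * τ k = 1 := by
          rw [hτ k h1 h2, mul_one_div, div_self (hppos k h1 h2).ne']
        rw [hpk1, one_smul]
      · rw [if_neg hks, if_neg hks, smul_zero]
    rw [Finset.sum_congr rfl step2, Finset.sum_add_distrib, ← Finset.sum_smul, hpsum, one_smul]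
    have step3 : ∑ k ∈ Finset.Icc 1 m,
        (if k ≤ kstar then (μ[S k | 𝒢]) ω - (μ[S (k - 1) | 𝒢]) ω else 0)
        = ∑ k ∈ Finset.Icc 1 kstar, ((μ[S k | 𝒢]) ω - (μ[S (k - 1) | 𝒢]) ω) := by
      rw [← Finset.sum_filter]
      congr 1
      ext x
      simp only [Finset.mem_filter, Finset.mem_Icc]
      omega
    rw [step3, aux_telescope (fun k => (μ[S k | 𝒢]) ω) kstar, hS0]
    abel
  -- conclusion
  have hbd : ∀ᵐ ω ∂μ, ∀ j : Fin d,
      |(μ[S kstar | 𝒢]) ω j - h ω j| ≤ 2 * ζ * G / ((1 - α) * (⌊τ kstar⌋₊ : ℝ)) :=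
    ae_all_iff.2 fun j => hbias kstar hk1 hk2 j
  have hB0 : 0 ≤ 2 * ζ * G / ((1 - α) * (⌊τ kstar⌋₊ : ℝ)) := by
    apply div_nonneg (by positivity)
    exact mul_nonneg (by linarith) (Nat.cast_nonneg _)
  filter_upwards [hmain, hbd] with ω h1 h2
  rw [h1]
  set B0 := 2 * ζ * G / ((1 - α) * (⌊τ kstar⌋₊ : ℝ)) with hB0def
  calc ‖(μ[S kstar | 𝒢]) ω - h ω‖
      = Real.sqrt (∑ j : Fin d, ‖((μ[S kstar | 𝒢]) ω - h ω) j‖ ^ 2) :=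
        EuclideanSpace.norm_eq _
    _ ≤ Real.sqrt (∑ _j : Fin d, B0 ^ 2) := by
        apply Real.sqrt_le_sqrt
        refine Finset.sum_le_sum fun j _ => ?_
        have hj : ‖((μ[S kstar | 𝒢]) ω - h ω) j‖ ≤ B0 := by
          rw [Real.norm_eq_abs]
          simpa using h2 j
        exact pow_le_pow_left₀ (norm_nonneg _) hj 2
    _ = Real.sqrt ((d : ℝ) * B0 ^ 2) := by
        rw [Finset.sum_const, Finset.card_univ, Fintype.card_fin, nsmul_eq_mul]
    _ = Real.sqrt d * B0 := by
        rw [Real.sqrt_mul (Nat.cast_nonneg d), Real.sqrt_sq hB0]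
    _ = 2 * ζ * G * Real.sqrt d / ((1 - α) * (⌊τ kstar⌋₊ : ℝ)) := by
        rw [hB0def]; ring
end

section
/- Drift lower bound under biased conditional means (key step of Theorem 1, eq. (h3-mlmc-gen)): let 𝒢 ⊆ 𝓕 be a sub-σ-algebra, let g : Ω → ℝ^d be 𝒢-measurable with ‖g‖ ≤ G almost surely, let A be a 𝒢-measurable random symmetric d×d matrix with λ̲ ‖x‖² ≤ ⟨x, A x⟩ ≤ λ̄ ‖x‖² for all x ∈ ℝ^d almost surely (deterministic 0 < λ̲ ≤ λ̄), and let H : Ω → ℝ^d be integrable with ‖E[H | 𝒢] − g‖ ≤ c₁ G / T almost surely, where c₁ > 0, T > 0. Then E[ ⟨g, A H⟩ ] ≥ λ̲ ( E[‖g‖²] − c₁ (λ̄/λ̲) G² / T ). -/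
open MeasureTheory
open scoped RealInnerProductSpace

section aux

variable {d : ℕ}

/-- Cauchy–Schwarz-type bound for a symmetric operator with spectrum in `[0, lamU]`. -/
lemma abs_inner_clm_le (lamU : ℝ)
    (A : EuclideanSpace ℝ (Fin d) →L[ℝ] EuclideanSpace ℝ (Fin d))
    (hsym : ∀ x y : EuclideanSpace ℝ (Fin d), ⟪A x, y⟫ = ⟪x, A y⟫)
    (hlow : ∀ x : EuclideanSpace ℝ (Fin d), 0 ≤ ⟪x, A x⟫)
    (hup : ∀ x : EuclideanSpace ℝ (Fin d), ⟪x, A x⟫ ≤ lamU * ‖x‖ ^ 2)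
    (x y : EuclideanSpace ℝ (Fin d)) : |⟪x, A y⟫| ≤ lamU * ‖x‖ * ‖y‖ := by
  have hcomm : ∀ u v : EuclideanSpace ℝ (Fin d), ⟪v, A u⟫ = ⟪u, A v⟫ := by
    intro u v
    rw [← hsym u v, real_inner_comm]
  have key : ∀ u v : EuclideanSpace ℝ (Fin d),
      |⟪u, A v⟫| ≤ lamU / 2 * (‖u‖ ^ 2 + ‖v‖ ^ 2) := by
    intro u v
    have hadd : ⟪u + v, A (u + v)⟫ = ⟪u, A u⟫ + ⟪v, A v⟫ + 2 * ⟪u, A v⟫ := by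
      rw [map_add, inner_add_left, inner_add_right, inner_add_right, hcomm u v]
      ring
    have hsub : ⟪u - v, A (u - v)⟫ = ⟪u, A u⟫ + ⟪v, A v⟫ - 2 * ⟪u, A v⟫ := by
      rw [map_sub, inner_sub_left, inner_sub_right, inner_sub_right, hcomm u v]
      ring
    have h1 := hlow (u + v)
    have h2 := hlow (u - v)
    have h3 := hup u
    have h4 := hup v
    have h5 := hlow u
    have h6 := hlow v
    rw [hadd] at h1
    rw [hsub] at h2
    rw [abs_le]
    constructor <;> nlinarith
  rcases eq_or_ne x 0 with rfl | hx
  · simp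
  rcases eq_or_ne y 0 with rfl | hy
  · simp
  have hxn : (0:ℝ) < ‖x‖ := norm_pos_iff.mpr hx
  have hyn : (0:ℝ) < ‖y‖ := norm_pos_iff.mpr hy
  set t : ℝ := Real.sqrt (‖y‖ / ‖x‖) with ht
  have htpos : 0 < t := Real.sqrt_pos.mpr (by positivity)
  have ht2 : t ^ 2 = ‖y‖ / ‖x‖ := Real.sq_sqrt (by positivity)
  have hscale : ⟪t • x, A (t⁻¹ • y)⟫ = ⟪x, A y⟫ := by
    rw [ContinuousLinearMap.map_smul, real_inner_smul_left, real_inner_smul_right]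
    field_simp
  have hkey := key (t • x) (t⁻¹ • y)
  rw [hscale, norm_smul, norm_smul] at hkey
  have hts : ‖t‖ = t := abs_of_pos htpos
  have htinv : ‖t⁻¹‖ = t⁻¹ := abs_of_pos (by positivity)
  rw [hts, htinv] at hkey
  have hexp : t ^ 2 * ‖x‖ ^ 2 + (t⁻¹) ^ 2 * ‖y‖ ^ 2 = 2 * (‖x‖ * ‖y‖) := by
    have h2' : (t⁻¹) ^ 2 = ‖x‖ / ‖y‖ := by
      rw [inv_pow, ht2]
      field_simp
    rw [ht2, h2']
    field_simp
    ring
  calc |⟪x, A y⟫| ≤ lamU / 2 * ((t * ‖x‖) ^ 2 + (t⁻¹ * ‖y‖) ^ 2) := hkey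
    _ = lamU / 2 * (t ^ 2 * ‖x‖ ^ 2 + (t⁻¹) ^ 2 * ‖y‖ ^ 2) := by ring
    _ = lamU * ‖x‖ * ‖y‖ := by rw [hexp]; ring

lemma clm_integrable_comp {Ω E F : Type*} [NormedAddCommGroup E] [NormedSpace ℝ E]
    [NormedAddCommGroup F] [NormedSpace ℝ F]
    {mΩ : MeasurableSpace Ω} {μ : Measure Ω}
    (L : E →L[ℝ] F) {f : Ω → E} (hf : Integrable f μ) :
    Integrable (fun a => L (f a)) μ :=
  L.integrable_comp hf

lemma integrableOn' {Ω E : Type*} [NormedAddCommGroup E]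
    {mΩ : MeasurableSpace Ω} {μ : Measure Ω} {s : Set Ω}
    {f : Ω → E} (hf : Integrable f μ) : Integrable f (μ.restrict s) :=
  hf.integrableOn

lemma clm_integral_comp_comm {Ω E F : Type*} [NormedAddCommGroup E] [NormedSpace ℝ E]
    [CompleteSpace E] [NormedAddCommGroup F] [NormedSpace ℝ F] [CompleteSpace F]
    {mΩ : MeasurableSpace Ω} {μ : Measure Ω}
    (L : E →L[ℝ] F) {f : Ω → E} (hf : Integrable f μ) :
    ∫ x, L (f x) ∂μ = L (∫ x, f x ∂μ) :=
  L.integral_comp_comm hf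

/-- Conditional expectation commutes with continuous linear maps. -/
lemma condexp_clm_comm {Ω : Type*} {m0 : MeasurableSpace Ω} {μ : Measure Ω} [IsFiniteMeasure μ]
    {m : MeasurableSpace Ω} (hm : m ≤ m0)
    {E F : Type*} [NormedAddCommGroup E] [NormedSpace ℝ E] [CompleteSpace E]
    [NormedAddCommGroup F] [NormedSpace ℝ F] [CompleteSpace F]
    (L : E →L[ℝ] F) {H : Ω → E} (hH : Integrable H μ) :
    (fun ω => L ((μ[H|m]) ω)) =ᵐ[μ] μ[fun ω => L (H ω)|m] := by
  have : SigmaFinite (μ.trim hm) := by infer_instance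
  refine ae_eq_condExp_of_forall_setIntegral_eq hm (clm_integrable_comp L hH) ?_ ?_ ?_
  · intro s _ _
    exact integrableOn' (clm_integrable_comp L integrable_condExp)
  · intro s hs _
    rw [clm_integral_comp_comm L (integrableOn' integrable_condExp),
        clm_integral_comp_comm L (integrableOn' hH), setIntegral_condExp hm hH hs]
  · exact (L.continuous.comp_stronglyMeasurable stronglyMeasurable_condExp).aestronglyMeasurable

end aux

/-- Key step of Theorem 1 of the paper (eq. (h3-mlmc-gen)): drift lower bound
under biased conditional means for a 𝒢-measurable preconditioner with
spectrum in `[λ̲, λ̄]`. -/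
theorem drift_lower_bound_biased_conditional_mean
    {Ω : Type*} {m0 : MeasurableSpace Ω} {μ : Measure Ω} [IsProbabilityMeasure μ]
    (𝒢 : MeasurableSpace Ω) (h𝒢 : 𝒢 ≤ m0)
    {d : ℕ} (hd : 1 ≤ d)
    (G c₁ T lamL lamU : ℝ)
    (hG : 0 < G) (hc₁ : 0 < c₁) (hT : 0 < T)
    (hlamL : 0 < lamL) (hlamLU : lamL ≤ lamU)
    -- the 𝒢-measurable bounded vector g
    (g : Ω → EuclideanSpace ℝ (Fin d))
    (hgmeas : StronglyMeasurable[𝒢] g)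
    (hgbd : ∀ᵐ ω ∂μ, ‖g ω‖ ≤ G)
    -- the 𝒢-measurable symmetric preconditioner with spectral bounds
    (A : Ω → EuclideanSpace ℝ (Fin d) →L[ℝ] EuclideanSpace ℝ (Fin d))
    (hAmeas : StronglyMeasurable[𝒢] A)
    (hAsym : ∀ᵐ ω ∂μ, ∀ x y : EuclideanSpace ℝ (Fin d), ⟪A ω x, y⟫ = ⟪x, A ω y⟫)
    (hAspec : ∀ᵐ ω ∂μ, ∀ x : EuclideanSpace ℝ (Fin d),
      lamL * ‖x‖ ^ 2 ≤ ⟪x, A ω x⟫ ∧ ⟪x, A ω x⟫ ≤ lamU * ‖x‖ ^ 2)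
    -- the integrable drift with biased conditional mean
    (H : Ω → EuclideanSpace ℝ (Fin d)) (hHint : Integrable H μ)
    (hbias : ∀ᵐ ω ∂μ, ‖(μ[H | 𝒢]) ω - g ω‖ ≤ c₁ * G / T) :
    ∫ ω, ⟪g ω, A ω (H ω)⟫ ∂μ
      ≥ lamL * ((∫ ω, ‖g ω‖ ^ 2 ∂μ) - c₁ * (lamU / lamL) * G ^ 2 / T) := by
  classical
  have hlamU0 : (0:ℝ) ≤ lamU := hlamL.le.trans hlamLU
  set E : Ω → EuclideanSpace ℝ (Fin d) := μ[H | 𝒢] with hEdef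
  have hEint : Integrable E μ := integrable_condExp
  set f : Ω → EuclideanSpace ℝ (Fin d) := fun ω => A ω (g ω) with hfdef
  have hfmeas : StronglyMeasurable[𝒢] f :=
    isBoundedBilinearMap_apply.continuous.comp_stronglyMeasurable (hAmeas.prodMk hgmeas)
  -- operator norm bound a.e.
  have hAnonneg : ∀ᵐ ω ∂μ, ∀ x : EuclideanSpace ℝ (Fin d), 0 ≤ ⟪x, A ω x⟫ := by
    filter_upwards [hAspec] with ω hspec x
    exact le_trans (mul_nonneg hlamL.le (by positivity)) (hspec x).1
  have hAbs : ∀ᵐ ω ∂μ, ∀ x y : EuclideanSpace ℝ (Fin d),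
      |⟪x, A ω y⟫| ≤ lamU * ‖x‖ * ‖y‖ := by
    filter_upwards [hAsym, hAspec, hAnonneg] with ω hsym hspec hnn x y
    exact abs_inner_clm_le lamU (A ω) hsym hnn (fun z => (hspec z).2) x y
  have hAnorm : ∀ᵐ ω ∂μ, ∀ x : EuclideanSpace ℝ (Fin d), ‖A ω x‖ ≤ lamU * ‖x‖ := by
    filter_upwards [hAbs] with ω habs x
    have h1 : ⟪A ω x, A ω x⟫ = ‖A ω x‖ ^ 2 := real_inner_self_eq_norm_sq _
    have h2 := habs (A ω x) x
    rw [h1, abs_of_nonneg (by positivity)] at h2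
    rcases (norm_nonneg ((A ω) x)).eq_or_lt' with h0 | h0
    · rw [h0]; positivity
    · nlinarith [mul_nonneg hlamU0 (norm_nonneg x)]
  have hfbd : ∀ᵐ ω ∂μ, ‖f ω‖ ≤ lamU * G := by
    filter_upwards [hAnorm, hgbd] with ω hn hg
    exact (hn (g ω)).trans (mul_le_mul_of_nonneg_left hg hlamU0)
  -- coordinates
  have hfi_meas : ∀ i : Fin d, StronglyMeasurable[𝒢] (fun ω => f ω i) := fun i =>
    (EuclideanSpace.proj i).continuous.comp_stronglyMeasurable hfmeas
  have hfi_bd : ∀ i : Fin d, ∀ᵐ ω ∂μ, ‖f ω i‖ ≤ lamU * G := by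
    intro i
    filter_upwards [hfbd] with ω hb
    have h1 : |f ω i| ≤ ‖f ω‖ := by
      have := abs_real_inner_le_norm (EuclideanSpace.single i (1:ℝ)) (f ω)
      simpa [EuclideanSpace.inner_single_left, EuclideanSpace.norm_single] using this
    calc ‖f ω i‖ = |f ω i| := rfl
      _ ≤ ‖f ω‖ := h1
      _ ≤ lamU * G := hb
  have hHi : ∀ i : Fin d, Integrable (fun ω => H ω i) μ := fun i =>
    clm_integrable_comp (EuclideanSpace.proj i) hHint
  have hEi : ∀ i : Fin d, Integrable (fun ω => E ω i) μ := fun i =>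
    clm_integrable_comp (EuclideanSpace.proj i) hEint
  have hcond : ∀ i : Fin d, (fun ω => E ω i) =ᵐ[μ] μ[fun ω => H ω i | 𝒢] := fun i =>
    condexp_clm_comm h𝒢 (EuclideanSpace.proj i) hHint
  have hprod1 : ∀ i : Fin d, Integrable (fun ω => f ω i * H ω i) μ := fun i =>
    (hHi i).bdd_mul ((hfi_meas i).mono h𝒢).aestronglyMeasurable (hfi_bd i)
  have hprod2 : ∀ i : Fin d, Integrable (fun ω => f ω i * E ω i) μ := fun i =>
    (hEi i).bdd_mul ((hfi_meas i).mono h𝒢).aestronglyMeasurable (hfi_bd i)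
  have expand : ∀ u v : EuclideanSpace ℝ (Fin d), ⟪u, v⟫ = ∑ i, u i * v i := fun u v => by
    simp [PiLp.inner_apply, mul_comm]
  -- integral chain
  have step1 : ∫ ω, ⟪g ω, A ω (H ω)⟫ ∂μ = ∫ ω, ⟪f ω, H ω⟫ ∂μ :=
    integral_congr_ae (by filter_upwards [hAsym] with ω hsym using (hsym (g ω) (H ω)).symm)
  have step2 : ∫ ω, ⟪f ω, H ω⟫ ∂μ = ∑ i, ∫ ω, f ω i * H ω i ∂μ := by
    rw [← integral_finset_sum _ fun i _ => hprod1 i]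
    exact integral_congr_ae (Filter.Eventually.of_forall fun ω => expand _ _)
  have step3 : ∀ i : Fin d, ∫ ω, f ω i * H ω i ∂μ = ∫ ω, f ω i * E ω i ∂μ := by
    intro i
    have hmul := condExp_stronglyMeasurable_mul_of_bound h𝒢 (hfi_meas i) (hHi i) (lamU * G)
      (hfi_bd i)
    calc ∫ ω, f ω i * H ω i ∂μ
        = ∫ ω, (μ[(fun ω => f ω i) * (fun ω => H ω i) | 𝒢]) ω ∂μ :=
          (integral_condExp h𝒢).symm
      _ = ∫ ω, f ω i * (μ[fun ω => H ω i | 𝒢]) ω ∂μ := integral_congr_ae hmul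
      _ = ∫ ω, f ω i * E ω i ∂μ := by
          refine integral_congr_ae ?_
          filter_upwards [hcond i] with ω h
          rw [← h]
  have step4 : ∑ i, ∫ ω, f ω i * E ω i ∂μ = ∫ ω, ⟪f ω, E ω⟫ ∂μ := by
    rw [← integral_finset_sum _ fun i _ => hprod2 i]
    exact (integral_congr_ae (Filter.Eventually.of_forall fun ω => expand _ _)).symm
  have step5 : ∫ ω, ⟪f ω, E ω⟫ ∂μ = ∫ ω, ⟪g ω, A ω (E ω)⟫ ∂μ :=
    integral_congr_ae (by filter_upwards [hAsym] with ω hsym using hsym (g ω) (E ω))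
  have keyeq : ∫ ω, ⟪g ω, A ω (H ω)⟫ ∂μ = ∫ ω, ⟪g ω, A ω (E ω)⟫ ∂μ := by
    rw [step1, step2, Finset.sum_congr rfl fun i _ => step3 i, step4, step5]
  -- integrability of the right-hand integrand
  have hsum_int : Integrable (fun ω => ∑ i : Fin d, f ω i * E ω i) μ :=
    integrable_finset_sum Finset.univ fun i _ => hprod2 i
  have hinner_int : Integrable (fun ω => ⟪g ω, A ω (E ω)⟫) μ := by
    refine hsum_int.congr ?_
    filter_upwards [hAsym] with ω hsym
    rw [← expand (f ω) (E ω)]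
    exact hsym (g ω) (E ω)
  -- integrability of ‖g‖²
  have hgsq_int : Integrable (fun ω => ‖g ω‖ ^ 2) μ := by
    refine (integrable_const (G ^ 2)).mono' ?_ ?_
    · exact (((hgmeas.mono h𝒢).norm).mul ((hgmeas.mono h𝒢).norm)).aestronglyMeasurable.congr
        (by filter_upwards with ω using by simp [Pi.mul_apply, sq])
    · filter_upwards [hgbd] with ω hg
      rw [Real.norm_eq_abs, abs_of_nonneg (by positivity)]
      exact pow_le_pow_left₀ (norm_nonneg _) hg 2
  -- pointwise inequality
  have hptwise : ∀ᵐ ω ∂μ,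
      lamL * ‖g ω‖ ^ 2 - lamU * G * (c₁ * G / T) ≤ ⟪g ω, A ω (E ω)⟫ := by
    filter_upwards [hAsym, hAspec, hAbs, hgbd, hbias] with ω hsym hspec habs hg hb
    have hdecomp : E ω = g ω + (E ω - g ω) := by abel
    have h1 : ⟪g ω, A ω (E ω)⟫ = ⟪g ω, A ω (g ω)⟫ + ⟪g ω, A ω (E ω - g ω)⟫ := by
      conv_lhs => rw [hdecomp]
      rw [map_add, inner_add_right]
    have h2 := (hspec (g ω)).1
    have h3 := habs (g ω) (E ω - g ω)
    have h4 : ‖E ω - g ω‖ ≤ c₁ * G / T := hb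
    have h5 : (0:ℝ) ≤ c₁ * G / T := by positivity
    have h6 : lamU * ‖g ω‖ * ‖E ω - g ω‖ ≤ lamU * G * (c₁ * G / T) := by
      have := mul_le_mul hg h4 (norm_nonneg _) hG.le
      nlinarith [norm_nonneg (g ω)]
    have h7 : -(lamU * G * (c₁ * G / T)) ≤ ⟪g ω, A ω (E ω - g ω)⟫ := by
      have := neg_abs_le (⟪g ω, A ω (E ω - g ω)⟫)
      linarith [h3.trans h6]
    linarith [h1, h2]
  -- put it together
  have hmono : ∫ ω, lamL * ‖g ω‖ ^ 2 - lamU * G * (c₁ * G / T) ∂μ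
      ≤ ∫ ω, ⟪g ω, A ω (E ω)⟫ ∂μ := by
    refine integral_mono_ae ?_ hinner_int hptwise
    exact (hgsq_int.const_mul lamL).sub (integrable_const _)
  have hval : ∫ ω, lamL * ‖g ω‖ ^ 2 - lamU * G * (c₁ * G / T) ∂μ
      = lamL * (∫ ω, ‖g ω‖ ^ 2 ∂μ) - lamU * G * (c₁ * G / T) := by
    rw [integral_sub (hgsq_int.const_mul lamL) (integrable_const _), integral_const_mul,
      integral_const]
    simp
  have harith : lamL * ((∫ ω, ‖g ω‖ ^ 2 ∂μ) - c₁ * (lamU / lamL) * G ^ 2 / T)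
      = lamL * (∫ ω, ‖g ω‖ ^ 2 ∂μ) - lamU * G * (c₁ * G / T) := by
    field_simp
  rw [ge_iff_le, keyeq, harith, ← hval]
  exact hmono
end

section
/- Moment decomposition of the multilevel estimator (eq. (mom-2p-gen-bound)): for every real p ≥ 2, E[ ‖Ĥ‖^p ] ≤ ((2G)^p / 2) (1 + 2^{2p}) + 4^{p−1} Σ_{k=1}^{k*} τ(k)^{p−1} E[ ‖ S_{τ(k)} − S_{τ(k−1)} ‖^p ]. This uses only the boundedness ‖H(x)‖ ≤ G and the independence of the level variable K from the underlying sequence. -/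
open MeasureTheory

lemma aux_rpow_add_le (a b pp : ℝ) (ha : 0 ≤ a) (hb : 0 ≤ b) (hp : 1 ≤ pp) :
    (a + b) ^ pp ≤ 2 ^ (pp - 1) * (a ^ pp + b ^ pp) := by
  lift a to NNReal using ha
  lift b to NNReal using hb
  have h := NNReal.rpow_add_le_mul_rpow_add_rpow a b hp
  have h2 : ((2 : NNReal) : ℝ) = (2 : ℝ) := by norm_num
  calc ((a : ℝ) + b) ^ pp = (((a + b : NNReal) : ℝ)) ^ pp := by push_cast; ring_nf
    _ = (((a + b) ^ pp : NNReal) : ℝ) := by rw [NNReal.coe_rpow]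
    _ ≤ (((2 : NNReal) ^ (pp - 1) * (a ^ pp + b ^ pp) : NNReal) : ℝ) := by exact_mod_cast h
    _ = 2 ^ (pp - 1) * ((a : ℝ) ^ pp + (b : ℝ) ^ pp) := by push_cast; ring

lemma partialAvg_norm_le {q d : ℕ} (H : (Fin q → ℝ) → EuclideanSpace ℝ (Fin d))
    (G : ℝ) (hG : 0 ≤ G) (hHbd : ∀ x, ‖H x‖ ≤ G) (Y : ℕ → (Fin q → ℝ)) (r : ℝ) :
    ‖partialAvg H Y r‖ ≤ G := by
  unfold partialAvg
  rcases Nat.eq_zero_or_pos ⌊r⌋₊ with h | h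
  · simp [h, hG]
  · have hn : (0 : ℝ) < (⌊r⌋₊ : ℝ) := by exact_mod_cast h
    rw [norm_smul]
    have hsum : ‖∑ i ∈ Finset.range ⌊r⌋₊, H (Y i)‖ ≤ (⌊r⌋₊ : ℝ) * G := by
      calc ‖∑ i ∈ Finset.range ⌊r⌋₊, H (Y i)‖ ≤ ∑ i ∈ Finset.range ⌊r⌋₊, ‖H (Y i)‖ :=
            norm_sum_le _ _
        _ ≤ ∑ _i ∈ Finset.range ⌊r⌋₊, G := Finset.sum_le_sum fun i _ => hHbd _
        _ = (⌊r⌋₊ : ℝ) * G := by simp [mul_comm]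
    calc ‖((⌊r⌋₊ : ℝ)⁻¹)‖ * ‖∑ i ∈ Finset.range ⌊r⌋₊, H (Y i)‖
        ≤ (⌊r⌋₊ : ℝ)⁻¹ * ((⌊r⌋₊ : ℝ) * G) := by
          rw [Real.norm_eq_abs, abs_of_nonneg (by positivity)]
          exact mul_le_mul_of_nonneg_left hsum (by positivity)
      _ = G := by field_simp

set_option maxHeartbeats 1000000 in
/-- Moment decomposition of the randomized multilevel estimator
(eq. (mom-2p-gen-bound) of the paper). -/
theorem mlmc_moment_decomposition
    {Ω : Type*} (𝒢 : MeasurableSpace Ω) {m0 : MeasurableSpace Ω} {μ : Measure Ω} [IsProbabilityMeasure μ]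
    (h𝒢 : 𝒢 ≤ m0)
    {d q : ℕ} (G : ℝ) (hG : 0 < G)
    (H : (Fin q → ℝ) → EuclideanSpace ℝ (Fin d)) (hHmeas : Measurable H)
    (hHbd : ∀ x, ‖H x‖ ≤ G)
    (X : ℕ → Ω → (Fin q → ℝ)) (hX : ∀ i, Measurable (X i))
    (m : ℕ) (hm : 1 ≤ m)
    (p : ℕ → ℝ) (hppos : ∀ k, 1 ≤ k → k ≤ m → 0 < p k)
    (hpsum : ∑ k ∈ Finset.Icc 1 m, p k = 1)
    (hpmono : ∀ j k, 1 ≤ j → j ≤ k → k ≤ m → p k ≤ p j)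
    (τ : ℕ → ℝ) (hτ0 : τ 0 = max 1 (1 / (2 * p 1)))
    (hτ : ∀ k, 1 ≤ k → k ≤ m → τ k = 1 / p k)
    (hτ0floor : ⌊τ 0⌋₊ = 1)
    (T : ℝ) (hT : τ 1 ≤ T)
    (kstar : ℕ) (hk1 : 1 ≤ kstar) (hk2 : kstar ≤ m)
    (hkle : (⌊τ kstar⌋₊ : ℝ) ≤ T)
    (hkmax : ∀ k, 1 ≤ k → k ≤ m → (⌊τ k⌋₊ : ℝ) ≤ T → k ≤ kstar)
    (K : Ω → ℕ) (hKmeas : Measurable K)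
    (hKlaw : ∀ k, 1 ≤ k → k ≤ m → μ {ω | K ω = k} = ENNReal.ofReal (p k))
    (hKrange : ∀ᵐ ω ∂μ, 1 ≤ K ω ∧ K ω ≤ m)
    (hindep : ProbabilityTheory.Indep (MeasurableSpace.comap K inferInstance)
      (𝒢 ⊔ ⨆ i, MeasurableSpace.comap (X i) inferInstance) μ)
    (Hhat : Ω → EuclideanSpace ℝ (Fin d))
    (hHhat : ∀ ω, Hhat ω = H (X 0 ω) +
      (if (⌊τ (K ω)⌋₊ : ℝ) ≤ T then
        τ (K ω) • (partialAvg H (fun i => X i ω) (τ (K ω)) -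
                   partialAvg H (fun i => X i ω) (τ (K ω - 1)))
       else 0))
    (pe : ℝ) (hpe : 2 ≤ pe) :
    ∫ ω, ‖Hhat ω‖ ^ pe ∂μ
      ≤ (2 * G) ^ pe / 2 * (1 + (2 : ℝ) ^ (2 * pe))
        + (4 : ℝ) ^ (pe - 1) *
            ∑ k ∈ Finset.Icc 1 kstar, τ k ^ (pe - 1) *
              ∫ ω, ‖partialAvg H (fun i => X i ω) (τ k) -
                    partialAvg H (fun i => X i ω) (τ (k - 1))‖ ^ pe ∂μ := by
  classical
  have hpe1 : (1 : ℝ) ≤ pe := by linarith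
  have hpe0 : (0 : ℝ) ≤ pe := by linarith
  -- positivity of τ on [1, m]
  have hτpos : ∀ k, 1 ≤ k → k ≤ m → 0 < τ k := fun k h1 h2 => by
    rw [hτ k h1 h2]; exact one_div_pos.mpr (hppos k h1 h2)
  -- Δ and g
  set Δ : ℕ → Ω → EuclideanSpace ℝ (Fin d) := fun k ω =>
    partialAvg H (fun i => X i ω) (τ k) - partialAvg H (fun i => X i ω) (τ (k - 1)) with hΔdef
  set g : ℕ → Ω → ℝ := fun k ω => ‖Δ k ω‖ ^ pe with hgdef
  have hX0 : ∀ i, Measurable[m0] (X i) := fun i => hX i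
  have hK0 : Measurable[m0] K := hKmeas
  have hmsup_le : (𝒢 ⊔ ⨆ i, MeasurableSpace.comap (X i) inferInstance) ≤ m0 := by
    refine sup_le h𝒢 (iSup_le fun i => ((hX i).comap_le))
  have hXi_sup : ∀ i, Measurable[(𝒢 ⊔ ⨆ i, MeasurableSpace.comap (X i) inferInstance)] (X i) := fun i =>
    Measurable.of_comap_le
      (le_trans (le_iSup (fun i => MeasurableSpace.comap (X i) inferInstance) i) le_sup_right)
  have hpa_meas : ∀ r : ℝ, Measurable[(𝒢 ⊔ ⨆ i, MeasurableSpace.comap (X i) inferInstance)] fun ω => partialAvg H (fun i => X i ω) r := by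
    intro r
    unfold partialAvg
    exact (Finset.measurable_sum _ fun i _ => hHmeas.comp (hXi_sup i)).const_smul ((⌊r⌋₊ : ℝ)⁻¹)
  have hΔmeas : ∀ k, Measurable[(𝒢 ⊔ ⨆ i, MeasurableSpace.comap (X i) inferInstance)] (Δ k) := fun k =>
    (hpa_meas (τ k)).sub (hpa_meas (τ (k - 1)))
  have hgmeas : ∀ k, Measurable[(𝒢 ⊔ ⨆ i, MeasurableSpace.comap (X i) inferInstance)] (g k) := fun k =>
    (Real.continuous_rpow_const hpe0).measurable.comp (measurable_norm.comp (hΔmeas k))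
  have hgmeas0 : ∀ k, Measurable[m0] (g k) := fun k => (hgmeas k).mono hmsup_le le_rfl
  have hΔbd : ∀ k ω, ‖Δ k ω‖ ≤ 2 * G := fun k ω => by
    calc ‖Δ k ω‖ ≤ ‖partialAvg H (fun i => X i ω) (τ k)‖ +
          ‖partialAvg H (fun i => X i ω) (τ (k - 1))‖ := norm_sub_le _ _
      _ ≤ G + G := add_le_add (partialAvg_norm_le H G hG.le hHbd _ _)
          (partialAvg_norm_le H G hG.le hHbd _ _)
      _ = 2 * G := by ring
  have hgnonneg : ∀ k ω, 0 ≤ g k ω := fun k ω => Real.rpow_nonneg (norm_nonneg _) pe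
  have hgbd : ∀ k ω, g k ω ≤ (2 * G) ^ pe := fun k ω =>
    Real.rpow_le_rpow (norm_nonneg _) (hΔbd k ω) hpe0
  have hg_int : ∀ k, Integrable (g k) μ := fun k =>
    (integrable_const ((2 * G) ^ pe)).mono' (hgmeas0 k).aestronglyMeasurable
      (Filter.Eventually.of_forall fun ω => by
        rw [Real.norm_eq_abs, abs_of_nonneg (hgnonneg k ω)]; exact hgbd k ω)
  -- φ
  set φ : ℕ → Ω → ℝ := fun k ω => if K ω = k then 1 else 0 with hφdef
  have hφmeas0 : ∀ k, Measurable[m0] (φ k) := fun k =>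
    Measurable.ite (hK0 (measurableSet_singleton k)) measurable_const measurable_const
  have hφnonneg : ∀ k ω, 0 ≤ φ k ω := fun k ω => by
    simp only [hφdef]; split <;> norm_num
  have hφle1 : ∀ k ω, φ k ω ≤ 1 := fun k ω => by
    simp only [hφdef]; split <;> norm_num
  -- f
  set f : Ω → ℝ := fun ω => ∑ k ∈ Finset.Icc 1 kstar, φ k ω * (τ k ^ pe * g k ω) with hfdef
  have hτnonneg : ∀ k ∈ Finset.Icc 1 kstar, 0 ≤ τ k := fun k hk => by
    rw [Finset.mem_Icc] at hk
    exact (hτpos k hk.1 (hk.2.trans hk2)).le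
  have hfnonneg : ∀ ω, 0 ≤ f ω := fun ω =>
    Finset.sum_nonneg fun k hk => mul_nonneg (hφnonneg k ω)
      (mul_nonneg (Real.rpow_nonneg (hτnonneg k hk) pe) (hgnonneg k ω))
  have hterm_int : ∀ k, Integrable (fun ω => φ k ω * (τ k ^ pe * g k ω)) μ := by
    intro k
    refine (integrable_const (1 * (|τ k ^ pe| * (2 * G) ^ pe))).mono'
      (((hφmeas0 k).mul ((hgmeas0 k).const_mul _)).aestronglyMeasurable)
      (Filter.Eventually.of_forall fun ω => ?_)
    rw [Real.norm_eq_abs, abs_mul, abs_mul, abs_of_nonneg (hφnonneg k ω),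
      abs_of_nonneg (hgnonneg k ω)]
    exact mul_le_mul (hφle1 k ω) (mul_le_mul_of_nonneg_left (hgbd k ω) (abs_nonneg _))
      (mul_nonneg (abs_nonneg _) (hgnonneg k ω)) zero_le_one
  have hf_int : Integrable f μ := integrable_finset_sum _ fun k _ => hterm_int k
  -- pointwise ae bound
  have hae : ∀ᵐ ω ∂μ, ‖Hhat ω‖ ^ pe ≤ 2 ^ (pe - 1) * (G ^ pe + f ω) := by
    filter_upwards [hKrange] with ω hω
    obtain ⟨hK1, hKm⟩ := hω
    set b : EuclideanSpace ℝ (Fin d) :=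
      (if (⌊τ (K ω)⌋₊ : ℝ) ≤ T then
        τ (K ω) • (partialAvg H (fun i => X i ω) (τ (K ω)) -
                   partialAvg H (fun i => X i ω) (τ (K ω - 1)))
       else 0) with hbdef
    have h1 : ‖Hhat ω‖ ^ pe ≤ (G + ‖b‖) ^ pe := by
      rw [hHhat ω]
      refine Real.rpow_le_rpow (norm_nonneg _) ?_ hpe0
      exact le_trans (norm_add_le _ _) (add_le_add (hHbd _) le_rfl)
    have h2 : (G + ‖b‖) ^ pe ≤ 2 ^ (pe - 1) * (G ^ pe + ‖b‖ ^ pe) :=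
      aux_rpow_add_le G ‖b‖ pe hG.le (norm_nonneg _) hpe1
    have h3 : ‖b‖ ^ pe ≤ f ω := by
      by_cases hc : (⌊τ (K ω)⌋₊ : ℝ) ≤ T
      · have hKk : K ω ≤ kstar := hkmax (K ω) hK1 hKm hc
        have hτK : 0 < τ (K ω) := hτpos _ hK1 hKm
        have hbeq : ‖b‖ ^ pe = τ (K ω) ^ pe * g (K ω) ω := by
          rw [hbdef, if_pos hc, norm_smul, Real.norm_eq_abs, abs_of_pos hτK,
            Real.mul_rpow hτK.le (norm_nonneg _)]
        have hmem : K ω ∈ Finset.Icc 1 kstar := Finset.mem_Icc.mpr ⟨hK1, hKk⟩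
        have hfeq : f ω = φ (K ω) ω * (τ (K ω) ^ pe * g (K ω) ω) := by
          show (∑ k ∈ Finset.Icc 1 kstar, φ k ω * (τ k ^ pe * g k ω)) = _
          exact Finset.sum_eq_single_of_mem (K ω) hmem
            (fun k _ hne => by simp [hφdef, Ne.symm hne])
        rw [hbeq, hfeq]
        simp [hφdef]
      · rw [hbdef, if_neg hc]
        rw [norm_zero, Real.zero_rpow (by linarith : pe ≠ 0)]
        exact hfnonneg ω
    have h4 : 2 ^ (pe - 1) * (G ^ pe + ‖b‖ ^ pe) ≤ 2 ^ (pe - 1) * (G ^ pe + f ω) :=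
      mul_le_mul_of_nonneg_left (by linarith) (Real.rpow_nonneg (by norm_num) _)
    linarith
  -- integral bound step 1
  have hstep1 : ∫ ω, ‖Hhat ω‖ ^ pe ∂μ ≤ 2 ^ (pe - 1) * (G ^ pe + ∫ ω, f ω ∂μ) := by
    have hint : Integrable (fun ω => 2 ^ (pe - 1) * (G ^ pe + f ω)) μ :=
      (((integrable_const (G ^ pe)).add hf_int).const_mul _)
    calc ∫ ω, ‖Hhat ω‖ ^ pe ∂μ ≤ ∫ ω, 2 ^ (pe - 1) * (G ^ pe + f ω) ∂μ :=
          integral_mono_of_nonneg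
            (Filter.Eventually.of_forall fun ω => Real.rpow_nonneg (norm_nonneg _) pe)
            hint hae
      _ = 2 ^ (pe - 1) * (G ^ pe + ∫ ω, f ω ∂μ) := by
          rw [integral_const_mul, integral_add (integrable_const _) hf_int, integral_const]
          simp
  -- independence factoring
  have hfactor : ∀ k, 1 ≤ k → k ≤ kstar →
      ∫ ω, φ k ω * (τ k ^ pe * g k ω) ∂μ = p k * (τ k ^ pe * ∫ ω, g k ω ∂μ) := by
    intro k hk1' hk2'
    have hkm : k ≤ m := hk2'.trans hk2
    have hφK : Measurable[MeasurableSpace.comap K inferInstance] (φ k) := by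
      have hK' : Measurable[MeasurableSpace.comap K inferInstance] K :=
        Measurable.of_comap_le le_rfl
      exact Measurable.ite (hK' (measurableSet_singleton k)) measurable_const measurable_const
    have hψ : Measurable[(𝒢 ⊔ ⨆ i, MeasurableSpace.comap (X i) inferInstance)] (fun ω => τ k ^ pe * g k ω) := (hgmeas k).const_mul _
    have hIndepFun : ProbabilityTheory.IndepFun (φ k) (fun ω => τ k ^ pe * g k ω) μ := by
      exact ProbabilityTheory.indep_of_indep_of_le_left
        (ProbabilityTheory.indep_of_indep_of_le_right hindep hψ.comap_le) hφK.comap_le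
    have hψint : Integrable (fun ω => τ k ^ pe * g k ω) μ := (hg_int k).const_mul _
    have hφint : Integrable (φ k) μ :=
      (integrable_const (1 : ℝ)).mono' (hφmeas0 k).aestronglyMeasurable
        (Filter.Eventually.of_forall fun ω => by
          rw [Real.norm_eq_abs, abs_of_nonneg (hφnonneg k ω)]; exact hφle1 k ω)
    have hmul : ∫ ω, φ k ω * (τ k ^ pe * g k ω) ∂μ
        = (∫ ω, φ k ω ∂μ) * ∫ ω, τ k ^ pe * g k ω ∂μ :=
      ProbabilityTheory.IndepFun.integral_fun_mul_eq_mul_integral hIndepFun hφint.aestronglyMeasurable hψint.aestronglyMeasurable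
    rw [hmul]
    have hφ_integral : ∫ ω, φ k ω ∂μ = p k := by
      letI : MeasurableSpace Ω := m0
      have h1 : φ k = (K ⁻¹' {k}).indicator (1 : Ω → ℝ) := by
        funext ω
        simp [hφdef, Set.indicator_apply, Set.mem_preimage, eq_comm]
      rw [h1]
      rw [MeasureTheory.integral_indicator_one (hK0 (measurableSet_singleton k))]
      have h2 : μ (K ⁻¹' {k}) = ENNReal.ofReal (p k) := hKlaw k hk1' hkm
      rw [measureReal_def, h2, ENNReal.toReal_ofReal (hppos k hk1' hkm).le]
    rw [hφ_integral, integral_const_mul]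
  -- integral of f
  have hfint_eq : ∫ ω, f ω ∂μ =
      ∑ k ∈ Finset.Icc 1 kstar, τ k ^ (pe - 1) * ∫ ω, g k ω ∂μ := by
    rw [hfdef, integral_finset_sum _ fun k _ => hterm_int k]
    refine Finset.sum_congr rfl fun k hk => ?_
    rw [Finset.mem_Icc] at hk
    rw [hfactor k hk.1 hk.2]
    have hτk : 0 < τ k := hτpos k hk.1 (hk.2.trans hk2)
    have hpk : p k = (τ k)⁻¹ := by
      rw [hτ k hk.1 (hk.2.trans hk2)]
      field_simp
    rw [hpk, ← mul_assoc]
    congr 1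
    rw [Real.rpow_sub hτk, Real.rpow_one]
    field_simp
  -- final assembly
  set S : ℝ := ∑ k ∈ Finset.Icc 1 kstar, τ k ^ (pe - 1) * ∫ ω, g k ω ∂μ with hSdef
  have hSnonneg : 0 ≤ S :=
    Finset.sum_nonneg fun k hk => mul_nonneg (Real.rpow_nonneg (hτnonneg k hk) _)
      (integral_nonneg fun ω => hgnonneg k ω)
  have h2G : (2 * G) ^ pe / 2 = 2 ^ (pe - 1) * G ^ pe := by
    rw [Real.mul_rpow (by norm_num) hG.le, Real.rpow_sub (by norm_num : (0:ℝ) < 2),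
      Real.rpow_one]
    ring
  have hfactor1 : (1 : ℝ) ≤ 1 + (2 : ℝ) ^ (2 * pe) := by
    have : (0 : ℝ) ≤ (2 : ℝ) ^ (2 * pe) := Real.rpow_nonneg (by norm_num) _
    linarith
  have h24 : (2 : ℝ) ^ (pe - 1) ≤ (4 : ℝ) ^ (pe - 1) :=
    Real.rpow_le_rpow (by norm_num) (by norm_num) (by linarith)
  have hfinal : ∫ ω, ‖Hhat ω‖ ^ pe ∂μ
      ≤ (2 * G) ^ pe / 2 * (1 + (2 : ℝ) ^ (2 * pe)) + (4 : ℝ) ^ (pe - 1) * S := by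
    calc ∫ ω, ‖Hhat ω‖ ^ pe ∂μ ≤ 2 ^ (pe - 1) * (G ^ pe + ∫ ω, f ω ∂μ) := hstep1
      _ = 2 ^ (pe - 1) * G ^ pe + 2 ^ (pe - 1) * S := by rw [hfint_eq]; ring
      _ ≤ (2 * G) ^ pe / 2 * (1 + (2 : ℝ) ^ (2 * pe)) + (4 : ℝ) ^ (pe - 1) * S := by
          refine add_le_add ?_ (mul_le_mul_of_nonneg_right h24 hSnonneg)
          rw [h2G]
          have hA : 0 ≤ 2 ^ (pe - 1) * G ^ pe :=
            mul_nonneg (Real.rpow_nonneg (by norm_num) _) (Real.rpow_nonneg hG.le _)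
          have hB : (0:ℝ) ≤ (2 : ℝ) ^ (2 * pe) := Real.rpow_nonneg (by norm_num) _
          nlinarith [mul_nonneg hA hB]
  exact hfinal
end

section
/- First-moment bound for the geometric multilevel estimator (used to control the initial AMSGrad term S_{5,0}): if ‖H(x)‖_∞ ≤ G for all x (so ‖H(x)‖ ≤ √d G), K is geometric 𝒢(1/2) on {1,2,…} and is independent of the sequence (X_i)_{i≥1}, and T ≥ 2, then E[ ‖Ĥ‖ ] ≤ √d G ( 1 + 2 log T / log 2 ), where Ĥ = H(X₁) + 2^K ( S_{2^K} − S_{2^{K−1}} ) 1{2^K ≤ T}. -/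
open MeasureTheory

/-- Partial average `S_r = r⁻¹ ∑_{i=1}^{r} H(X_i)` along a trajectory
(indexed from `0` here, so `X 0` plays the role of `X₁`). -/
noncomputable def natAvg {q d : ℕ} (H : (Fin q → ℝ) → EuclideanSpace ℝ (Fin d))
    (X : ℕ → (Fin q → ℝ)) (r : ℕ) : EuclideanSpace ℝ (Fin d) :=
  (r : ℝ)⁻¹ • ∑ i ∈ Finset.range r, H (X i)

lemma natAvg_norm_le {q d : ℕ} (H : (Fin q → ℝ) → EuclideanSpace ℝ (Fin d))
    (X : ℕ → (Fin q → ℝ)) (r : ℕ) {C : ℝ} (hC : 0 ≤ C)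
    (hH : ∀ x, ‖H x‖ ≤ C) : ‖natAvg H X r‖ ≤ C := by
  have h1 : ‖∑ i ∈ Finset.range r, H (X i)‖ ≤ r * C := by
    calc ‖∑ i ∈ Finset.range r, H (X i)‖ ≤ ∑ i ∈ Finset.range r, ‖H (X i)‖ :=
          norm_sum_le _ _
      _ ≤ ∑ _i ∈ Finset.range r, C := Finset.sum_le_sum fun i _ => hH _
      _ = r * C := by simp [mul_comm]
  rw [natAvg, norm_smul]
  rcases Nat.eq_zero_or_pos r with h | h
  · simp [h, hC]
  · have hr : (0:ℝ) < r := by exact_mod_cast h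
    calc ‖(r:ℝ)⁻¹‖ * ‖∑ i ∈ Finset.range r, H (X i)‖
        ≤ (r:ℝ)⁻¹ * (r * C) := by
          rw [Real.norm_eq_abs, abs_of_nonneg (by positivity)]
          exact mul_le_mul_of_nonneg_left h1 (by positivity)
      _ = C := by field_simp

/-- First-moment bound for the geometric multilevel estimator, used to control
the initial AMSGrad term `S_{5,0}` in the paper:
`E[‖Ĥ‖] ≤ √d G (1 + 2 log T / log 2)`. -/
theorem mlmc_geometric_first_moment_bound
    {Ω : Type*} {m0 : MeasurableSpace Ω} {μ : Measure Ω} [IsProbabilityMeasure μ]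
    {d q : ℕ} (G : ℝ) (hG : 0 < G)
    (H : (Fin q → ℝ) → EuclideanSpace ℝ (Fin d)) (hHmeas : Measurable H)
    -- ‖H(x)‖_∞ ≤ G
    (hHbd : ∀ x (j : Fin d), |H x j| ≤ G)
    (X : ℕ → Ω → (Fin q → ℝ)) (hX : ∀ i, Measurable (X i))
    (K : Ω → ℕ) (hKmeas : Measurable K)
    (hKlaw : ∀ k, 1 ≤ k → μ {ω | K ω = k} = ENNReal.ofReal ((1 / 2 : ℝ) ^ k))
    (hKrange : ∀ᵐ ω ∂μ, 1 ≤ K ω)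
    (hindep : ProbabilityTheory.Indep (MeasurableSpace.comap K inferInstance)
      (⨆ i, MeasurableSpace.comap (X i) inferInstance) μ)
    (T : ℝ) (hT : 2 ≤ T)
    (Hhat : Ω → EuclideanSpace ℝ (Fin d))
    (hHhat : ∀ ω, Hhat ω = H (X 0 ω) +
      (if ((2 : ℝ) ^ K ω) ≤ T then
        ((2 ^ K ω : ℕ) : ℝ) • (natAvg H (fun i => X i ω) (2 ^ K ω) -
                               natAvg H (fun i => X i ω) (2 ^ (K ω - 1)))
       else 0)) :
    ∫ ω, ‖Hhat ω‖ ∂μ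
      ≤ Real.sqrt d * G * (1 + 2 * Real.log T / Real.log 2) := by
  set C : ℝ := Real.sqrt d * G with hCdef
  have hC : 0 ≤ C := by positivity
  -- coordinatewise bound gives ‖H x‖ ≤ C
  have hHC : ∀ x, ‖H x‖ ≤ C := by
    intro x
    rw [EuclideanSpace.norm_eq]
    have : ∑ j, ‖H x j‖ ^ 2 ≤ (d : ℝ) * G ^ 2 := by
      calc ∑ j, ‖H x j‖ ^ 2 ≤ ∑ _j : Fin d, G ^ 2 :=
            Finset.sum_le_sum fun j _ => by
              have := hHbd x j
              have h0 : (0:ℝ) ≤ |H x j| := abs_nonneg _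
              calc ‖H x j‖ ^ 2 = |H x j| ^ 2 := by rw [Real.norm_eq_abs]
                _ ≤ G ^ 2 := pow_le_pow_left₀ h0 this 2
        _ = (d : ℝ) * G ^ 2 := by simp [mul_comm]
    calc Real.sqrt (∑ j, ‖H x j‖ ^ 2) ≤ Real.sqrt ((d:ℝ) * G ^ 2) :=
          Real.sqrt_le_sqrt this
      _ = C := by
          rw [hCdef, Real.sqrt_mul (by positivity), Real.sqrt_sq hG.le]
  have hT0 : (0:ℝ) < T := lt_of_lt_of_le (by norm_num) hT
  have hlogb0 : 0 ≤ Real.logb 2 T := Real.logb_nonneg (by norm_num) (by linarith)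
  set N : ℕ := ⌊Real.logb 2 T⌋₊ with hNdef
  -- key equivalence
  have hkey : ∀ k : ℕ, ((2:ℝ) ^ k ≤ T ↔ k ≤ N) := by
    intro k
    have h1 : (2:ℝ) ^ k ≤ T ↔ (k:ℝ) ≤ Real.logb 2 T := by
      rw [Real.le_logb_iff_rpow_le (by norm_num) hT0, Real.rpow_natCast]
    rw [h1, hNdef, Nat.le_floor_iff hlogb0]
  -- dominating function
  set g : Ω → ℝ := fun ω => C + ∑ k ∈ Finset.Icc 1 N,
      (if K ω = k then 2 * (2:ℝ) ^ k * C else 0) with hgdef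
  have hgint : Integrable g μ := by
    apply Integrable.add (integrable_const C)
    apply integrable_finset_sum
    intro k _
    have : (fun ω => if K ω = k then 2 * (2:ℝ) ^ k * C else 0)
        = Set.indicator {ω | K ω = k} (fun _ => 2 * (2:ℝ) ^ k * C) := by
      ext ω; by_cases h : K ω = k <;> simp [Set.indicator, h]
    rw [this]
    exact (integrable_const _).indicator (hKmeas (measurableSet_singleton k))
  -- pointwise bound a.e.
  have hbd : ∀ᵐ ω ∂μ, ‖Hhat ω‖ ≤ g ω := by
    filter_upwards [hKrange] with ω hω
    have hterm : ∀ k ∈ Finset.Icc 1 N,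
        (0:ℝ) ≤ (if K ω = k then 2 * (2:ℝ) ^ k * C else 0) := by
      intro k _; split <;> positivity
    rw [hHhat ω]
    by_cases hcase : (2:ℝ) ^ K ω ≤ T
    · have hmem : K ω ∈ Finset.Icc 1 N :=
        Finset.mem_Icc.mpr ⟨hω, (hkey (K ω)).mp hcase⟩
      have hsum : ∑ k ∈ Finset.Icc 1 N,
          (if K ω = k then 2 * (2:ℝ) ^ k * C else 0) = 2 * (2:ℝ) ^ K ω * C := by
        rw [Finset.sum_ite_eq (Finset.Icc 1 N) (K ω)
          (fun k => 2 * (2:ℝ) ^ k * C), if_pos hmem]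
      rw [hgdef]
      simp only [if_pos hcase, hsum]
      have h2 : ‖((2 ^ K ω : ℕ) : ℝ) • (natAvg H (fun i => X i ω) (2 ^ K ω) -
          natAvg H (fun i => X i ω) (2 ^ (K ω - 1)))‖ ≤ 2 * (2:ℝ) ^ K ω * C := by
        rw [norm_smul, Real.norm_eq_abs, Nat.abs_cast, Nat.cast_pow]
        push_cast
        calc (2:ℝ) ^ K ω * ‖natAvg H (fun i => X i ω) (2 ^ K ω) -
              natAvg H (fun i => X i ω) (2 ^ (K ω - 1))‖
            ≤ (2:ℝ) ^ K ω * (C + C) := by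
              apply mul_le_mul_of_nonneg_left _ (by positivity)
              calc ‖natAvg H (fun i => X i ω) (2 ^ K ω) -
                    natAvg H (fun i => X i ω) (2 ^ (K ω - 1))‖
                  ≤ ‖natAvg H (fun i => X i ω) (2 ^ K ω)‖ +
                    ‖natAvg H (fun i => X i ω) (2 ^ (K ω - 1))‖ := norm_sub_le _ _
                _ ≤ C + C := add_le_add (natAvg_norm_le H _ _ hC hHC)
                    (natAvg_norm_le H _ _ hC hHC)
          _ = 2 * (2:ℝ) ^ K ω * C := by ring
      calc ‖H (X 0 ω) + ((2 ^ K ω : ℕ) : ℝ) • (natAvg H (fun i => X i ω) (2 ^ K ω) -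
            natAvg H (fun i => X i ω) (2 ^ (K ω - 1)))‖
          ≤ ‖H (X 0 ω)‖ + ‖((2 ^ K ω : ℕ) : ℝ) • (natAvg H (fun i => X i ω) (2 ^ K ω) -
            natAvg H (fun i => X i ω) (2 ^ (K ω - 1)))‖ := norm_add_le _ _
        _ ≤ C + 2 * (2:ℝ) ^ K ω * C := add_le_add (hHC _) h2
    · rw [hgdef]
      simp only [if_neg hcase, add_zero]
      have : ‖H (X 0 ω)‖ ≤ C := hHC _
      have hs : (0:ℝ) ≤ ∑ k ∈ Finset.Icc 1 N,
          (if K ω = k then 2 * (2:ℝ) ^ k * C else 0) := Finset.sum_nonneg hterm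
      linarith
  -- compute ∫ g
  have hintk : ∀ k ∈ Finset.Icc 1 N,
      Integrable (fun ω => if K ω = k then 2 * (2:ℝ) ^ k * C else 0) μ := by
    intro k _
    have hind : (fun ω => if K ω = k then 2 * (2:ℝ) ^ k * C else 0)
        = Set.indicator {ω | K ω = k} (fun _ => 2 * (2:ℝ) ^ k * C) := by
      ext ω; by_cases h : K ω = k <;> simp [Set.indicator, h]
    rw [hind]
    exact (integrable_const _).indicator (hKmeas (measurableSet_singleton k))
  have hone : ∀ k ∈ Finset.Icc 1 N,
      ∫ ω, (if K ω = k then 2 * (2:ℝ) ^ k * C else 0) ∂μ = 2 * C := by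
    intro k hk
    have hk1 : 1 ≤ k := (Finset.mem_Icc.mp hk).1
    have step1 : ∫ ω, (if K ω = k then 2 * (2:ℝ) ^ k * C else 0) ∂μ
        = ∫ ω, Set.indicator (K ⁻¹' {k}) (fun _ => 2 * (2:ℝ) ^ k * C) ω ∂μ := by
      refine integral_congr_ae (Filter.Eventually.of_forall fun ω => ?_)
      by_cases h : K ω = k <;> simp [Set.indicator, h]
    have hset : K ⁻¹' {k} = {ω | K ω = k} := rfl
    rw [step1, integral_indicator (hKmeas (measurableSet_singleton k)),
      setIntegral_const, hset, measureReal_def, hKlaw k hk1, ENNReal.toReal_ofReal (by positivity),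
      smul_eq_mul]
    have h2 : ((1:ℝ)/2) ^ k * (2 * (2:ℝ) ^ k * C) = 2 * C := by
      rw [one_div, inv_pow]
      field_simp
    linarith [h2]
  have hgval : ∫ ω, g ω ∂μ = C + 2 * C * N := by
    rw [hgdef]
    rw [integral_add (integrable_const C) (integrable_finset_sum _ hintk),
      integral_finset_sum _ hintk, integral_const, measureReal_def, measure_univ,
      Finset.sum_congr rfl hone, Finset.sum_const, Nat.card_Icc]
    simp only [ENNReal.toReal_one, one_smul, smul_eq_mul, Nat.add_sub_cancel,
      nsmul_eq_mul]
    ring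
  -- conclude
  have hmain : ∫ ω, ‖Hhat ω‖ ∂μ ≤ ∫ ω, g ω ∂μ :=
    integral_mono_of_nonneg (Filter.Eventually.of_forall fun ω => norm_nonneg _)
      hgint hbd
  rw [hgval] at hmain
  have hNle : (N:ℝ) ≤ Real.log T / Real.log 2 := by
    have := Nat.floor_le hlogb0
    rwa [Real.logb] at this
  calc ∫ ω, ‖Hhat ω‖ ∂μ ≤ C + 2 * C * N := hmain
    _ ≤ C + 2 * C * (Real.log T / Real.log 2) := by
        apply add_le_add_right
        exact mul_le_mul_of_nonneg_left hNle (by positivity)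
    _ = Real.sqrt d * G * (1 + 2 * Real.log T / Real.log 2) := by
        rw [hCdef]; ring
end
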